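/- arXiv:2402.10442 — 3 statements merged into one kernel-verified Lean document; each statement's English description precedes it below -/
import Mathlib

section
/- For real x with |x| < π/2, tan x = ∑_{m=1}^∞ (-1)^{m+1} (2^{2m} - 1) 2^{2m} B_{2m} / (2m)! · x^{2m-1}, with the series converging. -/
/-!
In `ℂ⟦X⟧` the Bernoulli generating function gives `X cot X = iX + B(2iX)`, and
`tan X = cot X - 2 cot 2X` turns this into the formal identity `T * cos = sin` for the power
series `T` with the claimed coefficients. Euler's evaluation of `ζ(2k)` in terms of `B_{2k}` shows
that the coefficient of `X^(2k-1)` in `T` is `2 (4^k - 1) ζ(2k) / π^(2k) = O((2/π)^(2k))`, so `T`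
converges absolutely for `|x| < π/2`; there the Cauchy product of `T(x)` with the cosine series
is the sine series, hence `T(x) = sin x / cos x`.
-/

open PowerSeries

open scoped Real

theorem hasSum_odd_iff {M : Type*} [AddCommMonoid M] [TopologicalSpace M] {f : ℕ → M} {a : M}
    (hf : ∀ k, f (2 * k) = 0) : HasSum (fun k => f (2 * k + 1)) a ↔ HasSum f a :=
  Function.Injective.hasSum_iff (g := fun k => 2 * k + 1) (fun _ _ h => by simpa using h)
    fun n hn => by
      obtain ⟨k, rfl | rfl⟩ := n.even_or_odd'
      exacts [hf k, absurd ⟨k, rfl⟩ hn]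

theorem hasSum_even_iff {M : Type*} [AddCommMonoid M] [TopologicalSpace M] {f : ℕ → M} {a : M}
    (hf : ∀ k, f (2 * k + 1) = 0) : HasSum (fun k => f (2 * k)) a ↔ HasSum f a :=
  Function.Injective.hasSum_iff (g := fun k => 2 * k) (fun _ _ h => by simpa using h)
    fun n hn => by
      obtain ⟨k, rfl | rfl⟩ := n.even_or_odd'
      exacts [absurd ⟨k, rfl⟩ hn, hf k]

namespace PowerSeries

theorem rescale_exp_eq_cos_add_C_mul_sin {A : Type*} [CommRing A] [Algebra ℚ A] {c : A}
    (hc : c ^ 2 = -1) : rescale c (exp A) = cos A + C c * sin A := by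
  ext n
  obtain ⟨k, rfl | rfl⟩ := n.even_or_odd'
  · simp [coeff_rescale, coeff_exp, cos, sin, pow_mul, hc, coeff_C_mul, div_eq_mul_inv]
  · simp [coeff_rescale, coeff_exp, cos, sin, pow_succ, pow_mul, hc, coeff_C_mul, div_eq_mul_inv]
    rw [show (2 * k + 1) / 2 = k by omega]
    ring

theorem rescale_bernoulliPowerSeries_mul_exp_sub_one {A : Type*} [CommRing A] [Algebra ℚ A]
    (a : A) : rescale a (bernoulliPowerSeries A) * (rescale a (exp A) - 1) = C a * X := by
  simpa [rescale_X] using congrArg (rescale a) (bernoulliPowerSeries_mul_exp_sub_one A)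

theorem tsum_coeff_mul_mul_pow {R : Type*} [NormedCommRing R] [CompleteSpace R]
    {f g : R⟦X⟧} {x : R} (hf : Summable fun n => ‖coeff n f * x ^ n‖)
    (hg : Summable fun n => ‖coeff n g * x ^ n‖) :
    ∑' n, coeff n (f * g) * x ^ n = (∑' n, coeff n f * x ^ n) * ∑' n, coeff n g * x ^ n := by
  rw [tsum_mul_tsum_eq_tsum_sum_antidiagonal_of_summable_norm hf hg]
  refine tsum_congr fun n => ?_
  rw [coeff_mul, Finset.sum_mul]
  refine Finset.sum_congr rfl fun p hp => ?_
  rw [← Finset.HasAntidiagonal.mem_antidiagonal.mp hp, pow_add]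
  ring

theorem hasSum_coeff_cos_mul_pow (x : ℝ) :
    HasSum (fun n => coeff n (cos ℝ) * x ^ n) (Real.cos x) := by
  refine (hasSum_even_iff fun k => by simp [cos]).mp ?_
  simpa [cos, pow_mul, div_eq_mul_inv, mul_right_comm] using Real.hasSum_cos x

theorem hasSum_coeff_sin_mul_pow (x : ℝ) :
    HasSum (fun n => coeff n (sin ℝ) * x ^ n) (Real.sin x) := by
  refine (hasSum_odd_iff fun k => by simp [sin]).mp ?_
  simpa [sin, pow_mul, div_eq_mul_inv, mul_right_comm, show ∀ k, (2 * k + 1) / 2 = k by omega]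
    using Real.hasSum_sin x

theorem summable_norm_coeff_cos_mul_pow (x : ℝ) :
    Summable fun n => ‖coeff n (cos ℝ) * x ^ n‖ := by
  refine (Real.summable_pow_div_factorial ‖x‖).of_nonneg_of_le (fun n => norm_nonneg _) fun n => ?_
  rw [norm_mul, norm_pow, div_eq_inv_mul]
  gcongr
  by_cases hn : Even n <;> simp [cos, hn]

end PowerSeries

/-- The coefficient of `x ^ (2 * m + 1)` in the Taylor series of `tan`. -/
noncomputable def tanCoeff (m : ℕ) : ℝ :=
  (-1) ^ (m + 1 + 1) * ((2 ^ (2 * (m + 1)) - 1) * 2 ^ (2 * (m + 1)) *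
    (bernoulli (2 * (m + 1)) : ℝ) / (Nat.factorial (2 * (m + 1))))

noncomputable def tanSeries : ℝ⟦X⟧ := mk fun n => if Even n then 0 else tanCoeff (n / 2)

@[simp] lemma coeff_tanSeries_two_mul (k : ℕ) : coeff (2 * k) tanSeries = 0 := by
  simp [tanSeries]

@[simp] lemma coeff_tanSeries_two_mul_add_one (k : ℕ) :
    coeff (2 * k + 1) tanSeries = tanCoeff k := by
  simp [tanSeries, show (2 * k + 1) / 2 = k by omega]

section Complex

open Complex

/-- With `D(X) = iX + B(2iX) = X cot X`, this is `X tan X = D(X) - D(2X)`. -/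
lemma X_mul_map_tanSeries :
    X * map ofRealHom tanSeries = rescale (2 * I) (bernoulliPowerSeries ℂ) -
      rescale (4 * I) (bernoulliPowerSeries ℂ) - C I * X := by
  ext n
  simp only [bernoulliPowerSeries, rescale_mk, map_sub, coeff_mk, coeff_C_mul, coeff_X, eq_ratCast]
  rcases n with _ | n
  · simp
  rw [coeff_succ_X_mul, coeff_map]
  obtain ⟨k, rfl | rfl⟩ := n.even_or_odd'
  · rw [coeff_tanSeries_two_mul]
    rcases k with _ | k
    · simp [bernoulli_one]
      ring
    · rw [bernoulli_eq_zero_of_odd ⟨k + 1, by ring⟩ (by omega)]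
      simp
  · have h2I : (2 * I) ^ (2 * (k + 1)) = (-1) ^ (k + 1) * 2 ^ (2 * (k + 1)) := by
      rw [pow_mul, pow_mul, mul_pow, I_sq, mul_pow, mul_comm]
    rw [coeff_tanSeries_two_mul_add_one, show 2 * k + 1 + 1 = 2 * (k + 1) by ring,
      show 4 * I = 2 * (2 * I) by ring, mul_pow 2 (2 * I), h2I]
    simp [tanCoeff]
    ring

lemma X_mul_map_tanSeries_mul_exp_add_one :
    X * map ofRealHom tanSeries * (rescale (2 * I) (exp ℂ) + 1) =
      -(C I * X) * (rescale (2 * I) (exp ℂ) - 1) := by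
  set u := rescale (2 * I) (exp ℂ)
  have hu2 : rescale (4 * I) (exp ℂ) = u * u := by
    rw [exp_mul_exp_eq_exp_add]; ring_nf
  have hb := rescale_bernoulliPowerSeries_mul_exp_sub_one (2 * I)
  have hb2 := rescale_bernoulliPowerSeries_mul_exp_sub_one (4 * I)
  rw [hu2] at hb2
  simp only [map_mul, map_ofNat] at hb hb2
  have hne : u - 1 ≠ 0 := fun h => by
    simpa [u, coeff_rescale, coeff_exp] using congrArg (coeff 1) h
  refine mul_right_cancel₀ hne ?_
  linear_combination (u + 1) * (u - 1) * X_mul_map_tanSeries + (u + 1) * hb - hb2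

lemma map_tanSeries_mul_cos : map ofRealHom tanSeries * cos ℂ = sin ℂ := by
  have hE' : rescale (-I) (exp ℂ) = cos ℂ - C I * sin ℂ := by
    rw [rescale_exp_eq_cos_add_C_mul_sin (by rw [neg_sq, I_sq]), map_neg, neg_mul, sub_eq_add_neg]
  set E := rescale I (exp ℂ)
  set E' := rescale (-I) (exp ℂ)
  have hE : E = cos ℂ + C I * sin ℂ := rescale_exp_eq_cos_add_C_mul_sin I_sq
  have hEE' : E * E' = 1 := by
    rw [exp_mul_exp_eq_exp_add, add_neg_cancel, rescale_zero_apply, constantCoeff_exp, map_one]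
  have hu : rescale (2 * I) (exp ℂ) = E * E := by
    rw [exp_mul_exp_eq_exp_add, two_mul]
  have hCI : C I * C I = (-1 : ℂ⟦X⟧) := by rw [← map_mul, I_mul_I, map_neg, map_one]
  have h := X_mul_map_tanSeries_mul_exp_add_one
  rw [hu] at h
  have h2 : (2 : ℂ⟦X⟧) ≠ 0 := by
    rw [← map_ofNat C 2]; exact (map_ne_zero_iff _ C_injective).mpr two_ne_zero
  have hXE : 2 * X * E ≠ 0 := by
    refine mul_ne_zero (mul_ne_zero h2 X_ne_zero) fun h => ?_
    simpa [E, coeff_rescale, coeff_exp] using congrArg (coeff 0) h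
  refine mul_left_cancel₀ hXE ?_
  -- `E * E ± 1 = E * (E ± E')`, where `E + E' = 2 cos` and `E - E' = 2 i sin`.
  set T := map ofRealHom tanSeries
  linear_combination h + (-X * T * E - C I * X * E) * hE + (-X * T * E + C I * X * E) * hE' +
    (X * T - C I * X) * hEE' - 2 * X * E * sin ℂ * hCI

end Complex

lemma tanSeries_mul_cos : tanSeries * cos ℝ = sin ℝ :=
  map_injective Complex.ofRealHom Complex.ofReal_injective (by simpa using map_tanSeries_mul_cos)

lemma tanCoeff_eq_mul_tsum_zeta (m : ℕ) :
    tanCoeff m = 2 * (2 ^ (2 * (m + 1)) - 1) / π ^ (2 * (m + 1)) *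
      ∑' n : ℕ, 1 / (n : ℝ) ^ (2 * (m + 1)) := by
  rw [(hasSum_zeta_nat m.succ_ne_zero).tsum_eq, tanCoeff,
    show 2 * (m + 1) - 1 = 2 * m + 1 by omega, show 2 * (m + 1) = 2 * m + 1 + 1 by ring, pow_succ]
  field_simp
  ring

lemma abs_tanCoeff_le (m : ℕ) : |tanCoeff m| ≤ π ^ 2 / 3 * (2 / π) ^ (2 * (m + 1)) := by
  have hle : ∑' n : ℕ, 1 / (n : ℝ) ^ (2 * (m + 1)) ≤ π ^ 2 / 6 := by
    refine hasSum_le (fun n => ?_) (hasSum_zeta_nat m.succ_ne_zero).summable.hasSum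
      hasSum_zeta_two
    rcases n.eq_zero_or_pos with rfl | hn
    · simp
    · exact one_div_le_one_div_of_le (by positivity)
        (pow_le_pow_right₀ (by exact_mod_cast hn) (by omega))
  have h1 : (1 : ℝ) ≤ 2 ^ (2 * (m + 1)) := one_le_pow₀ one_le_two
  rw [tanCoeff_eq_mul_tsum_zeta,
    abs_of_nonneg (mul_nonneg (by positivity) (tsum_nonneg fun n => by positivity))]
  calc 2 * (2 ^ (2 * (m + 1)) - 1) / π ^ (2 * (m + 1)) * ∑' n : ℕ, 1 / (n : ℝ) ^ (2 * (m + 1))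
      ≤ 2 * 2 ^ (2 * (m + 1)) / π ^ (2 * (m + 1)) * (π ^ 2 / 6) := by
        gcongr
        linarith
    _ = π ^ 2 / 3 * (2 / π) ^ (2 * (m + 1)) := by ring

lemma summable_norm_coeff_tanSeries_mul_pow {x : ℝ} (hx : |x| < π / 2) :
    Summable fun n => ‖coeff n tanSeries * x ^ n‖ := by
  set r := 2 * |x| / π with hr
  have hr0 : 0 ≤ r := by positivity
  have hr1 : r < 1 := by rw [div_lt_one Real.pi_pos]; linarith
  have hodd : Summable fun k => ‖coeff (2 * k + 1) tanSeries * x ^ (2 * k + 1)‖ := by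
    refine ((summable_geometric_of_lt_one hr0 hr1).mul_left (2 * π / 3)).of_nonneg_of_le
      (fun k => norm_nonneg _) fun k => ?_
    rw [coeff_tanSeries_two_mul_add_one, norm_mul, norm_pow, Real.norm_eq_abs, Real.norm_eq_abs]
    calc |tanCoeff k| * |x| ^ (2 * k + 1)
        ≤ π ^ 2 / 3 * (2 / π) ^ (2 * (k + 1)) * |x| ^ (2 * k + 1) := by
          gcongr; exact abs_tanCoeff_le k
      _ = 2 * π / 3 * r ^ (2 * k + 1) := by
          rw [hr, show 2 * (k + 1) = 2 * k + 1 + 1 by ring, pow_succ, div_pow, div_pow, mul_pow]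
          field_simp
          ring
      _ ≤ 2 * π / 3 * r ^ k := by
          have := pow_le_pow_of_le_one hr0 hr1.le (by omega : k ≤ 2 * k + 1)
          gcongr
  obtain ⟨a, ha⟩ := hodd
  exact ((hasSum_odd_iff (f := fun n => ‖coeff n tanSeries * x ^ n‖) fun k => by simp).mp
    ha).summable

theorem tan_series (x : ℝ) (hx : |x| < Real.pi / 2) :
    HasSum (fun m : ℕ =>
        (-1) ^ (m + 1 + 1) * ((2 ^ (2 * (m + 1)) - 1) * 2 ^ (2 * (m + 1)) *
          (bernoulli (2 * (m + 1)) : ℝ) / (Nat.factorial (2 * (m + 1)))) *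
          x ^ (2 * (m + 1) - 1))
      (Real.tan x) := by
  have hT := summable_norm_coeff_tanSeries_mul_pow hx
  have hcos : Real.cos x ≠ 0 := (Real.cos_pos_of_mem_Ioo (abs_lt.mp hx)).ne'
  have hsum : ∑' n, coeff n tanSeries * x ^ n = Real.tan x := by
    rw [Real.tan_eq_sin_div_cos, eq_div_iff hcos, ← (hasSum_coeff_cos_mul_pow x).tsum_eq,
      ← tsum_coeff_mul_mul_pow hT (summable_norm_coeff_cos_mul_pow x), tanSeries_mul_cos,
      (hasSum_coeff_sin_mul_pow x).tsum_eq]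
  have hodd := (hasSum_odd_iff fun k => by simp).mpr (hsum ▸ hT.of_norm.hasSum)
  refine hodd.congr_fun fun m => ?_
  rw [coeff_tanSeries_two_mul_add_one, show 2 * (m + 1) - 1 = 2 * m + 1 by omega, tanCoeff]
end

section
/- The alternating series ∑_{n=1}^∞ (-1)^{n+1} (log n)/n converges to (1/2) log² 2 - γ log 2, where γ is the Euler–Mascheroni constant. -/
/-!
Subtracting twice the even-indexed terms from `∑_{n ≤ 2N} log n / n` and using
`2 · log (2m) / (2m) = (log 2 + log m) / m` gives, for the partial sums `S`,
`S_{2N} = ∑_{N < n ≤ 2N} log n / n - log 2 · H_N`.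
As `log x / x` decreases for `x ≥ e`, the block sum equals `∫_N^{2N} log x / x + o(1)`,
that is `½ log² 2 + log 2 · log N + o(1)`, while `H_N - log N → γ`.
The odd partial sums differ from the even ones by a term tending to `0`.
-/

open Filter Finset Real Topology

theorem Filter.Tendsto.of_comp_two_mul_of_comp_two_mul_add_one {α : Type*} {u : ℕ → α}
    {l : Filter α} (h_even : Tendsto (fun n ↦ u (2 * n)) atTop l)
    (h_odd : Tendsto (fun n ↦ u (2 * n + 1)) atTop l) : Tendsto u atTop l := by
  intro s hs
  obtain ⟨a, ha⟩ := eventually_atTop.1 (h_even hs)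
  obtain ⟨b, hb⟩ := eventually_atTop.1 (h_odd hs)
  refine eventually_atTop.2 ⟨2 * (a + b), fun n hn ↦ ?_⟩
  obtain ⟨k, rfl | rfl⟩ := Nat.even_or_odd' n
  · exact ha k (by omega)
  · exact hb k (by omega)

theorem sum_Icc_neg_one_pow_mul_eq {R : Type*} [CommRing R] (f : ℕ → R) (N : ℕ) :
    ∑ n ∈ Icc 1 (2 * N), (-1) ^ (n + 1) * f n =
      ∑ n ∈ Icc 1 (2 * N), f n - 2 * ∑ m ∈ Icc 1 N, f (2 * m) := by
  induction N with
  | zero => simp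
  | succ N ih =>
    rw [show 2 * (N + 1) = 2 * N + 1 + 1 by ring]
    simp only [sum_Icc_succ_top (by omega : 1 ≤ 2 * N + 1 + 1),
      sum_Icc_succ_top (by omega : 1 ≤ 2 * N + 1), sum_Icc_succ_top (by omega : 1 ≤ N + 1), ih]
    have h_even : Even (2 * N + 1 + 1) := ⟨N + 1, by ring⟩
    rw [pow_succ _ (2 * N + 1 + 1), h_even.neg_one_pow, show 2 * (N + 1) = 2 * N + 1 + 1 by ring]
    ring

theorem AntitoneOn.sum_Ioc_le_integral {f : ℝ → ℝ} {a b : ℕ} (hab : a ≤ b)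
    (hf : AntitoneOn f (Set.Icc a b)) : ∑ n ∈ Ioc a b, f n ≤ ∫ x in a..b, f x := by
  simpa [← Ico_add_one_add_one_eq_Ioc, ← sum_Ico_add'] using hf.sum_le_integral_Ico hab

theorem AntitoneOn.integral_le_sum_Ioc_add_sub {f : ℝ → ℝ} {a b : ℕ} (hab : a ≤ b)
    (hf : AntitoneOn f (Set.Icc a b)) :
    ∫ x in a..b, f x ≤ ∑ n ∈ Ioc a b, f n + (f a - f b) := by
  have h_shift := (sum_Ico_add_eq_sum_Icc (f := fun n : ℕ ↦ f n) hab).trans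
    (add_sum_Ioc_eq_sum_Icc hab).symm
  linarith [hf.integral_le_sum_Ico hab]

theorem integral_log_div_self {a b : ℝ} (ha : 0 < a) (hb : 0 < b) :
    ∫ x in a..b, log x / x = log b ^ 2 / 2 - log a ^ 2 / 2 := by
  have hpos : ∀ x ∈ Set.uIcc a b, x ≠ 0 := fun x hx ↦
    (lt_of_lt_of_le (lt_min ha hb) hx.1).ne'
  refine intervalIntegral.integral_eq_sub_of_hasDerivAt (f := fun x ↦ log x ^ 2 / 2)
    (fun x hx ↦ ?_) ?_
  · refine (((hasDerivAt_log (hpos x hx)).fun_pow 2).div_const 2).congr_deriv ?_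
    field_simp
    norm_num
  · exact (continuousOn_log.mono fun x hx ↦ hpos x hx).div continuousOn_id hpos
      |>.intervalIntegrable

theorem tendsto_log_div_self_natCast :
    Tendsto (fun n : ℕ ↦ log n / n) atTop (𝓝 0) := by
  have h : Tendsto (fun x : ℝ ↦ log x / x) atTop (𝓝 0) := by
    simpa using isLittleO_log_id_atTop.tendsto_div_nhds_zero
  exact h.comp tendsto_natCast_atTop_atTop

theorem tendsto_sum_Ioc_log_div_self_sub :
    Tendsto (fun N : ℕ ↦ ∑ n ∈ Ioc N (2 * N), log n / n - log 2 * log N) atTop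
      (𝓝 (log 2 ^ 2 / 2)) := by
  have h_err : Tendsto (fun N : ℕ ↦ log N / N - log (2 * N : ℕ) / (2 * N : ℕ)) atTop (𝓝 0) := by
    simpa using tendsto_log_div_self_natCast.sub
      (tendsto_log_div_self_natCast.comp (tendsto_id.const_mul_atTop' two_pos))
  have h_bounds : ∀ᶠ N : ℕ in atTop,
      log 2 ^ 2 / 2 - (log N / N - log (2 * N : ℕ) / (2 * N : ℕ)) ≤
        ∑ n ∈ Ioc N (2 * N), log n / n - log 2 * log N ∧
      ∑ n ∈ Ioc N (2 * N), log n / n - log 2 * log N ≤ log 2 ^ 2 / 2 := by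
    filter_upwards [eventually_ge_atTop 3] with N hN
    have hN_pos : (0 : ℝ) < N := by positivity
    have h_anti : AntitoneOn (fun x : ℝ ↦ log x / x) (Set.Icc N (2 * N : ℕ)) :=
      log_div_self_antitoneOn.mono fun x hx ↦ by
        have hN_ge : (3 : ℝ) ≤ N := by exact_mod_cast hN
        exact (exp_one_lt_d9.trans (by norm_num)).le.trans (hN_ge.trans hx.1)
    have h_int : ∫ x in (N : ℝ)..(2 * N : ℕ), log x / x = log 2 ^ 2 / 2 + log 2 * log N := by
      rw [integral_log_div_self hN_pos (by positivity), Nat.cast_mul, Nat.cast_two,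
        log_mul two_ne_zero hN_pos.ne']
      ring
    have h_le := h_anti.sum_Ioc_le_integral (by omega)
    have h_ge := h_anti.integral_le_sum_Ioc_add_sub (by omega)
    constructor <;> linarith
  exact tendsto_of_tendsto_of_tendsto_of_le_of_le' (by simpa using tendsto_const_nhds.sub h_err)
    tendsto_const_nhds (h_bounds.mono fun _ ↦ And.left) (h_bounds.mono fun _ ↦ And.right)

theorem sum_Icc_neg_one_pow_mul_log_div_self (N : ℕ) :
    ∑ n ∈ Icc 1 (2 * N), (-1 : ℝ) ^ (n + 1) * log n / n =
      ∑ n ∈ Ioc N (2 * N), log n / n - log 2 * harmonic N := by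
  have h_double : ∀ m ∈ Icc 1 N,
      2 * (log (2 * m : ℕ) / (2 * m : ℕ)) = log 2 * (m : ℝ)⁻¹ + log m / m := by
    intro m hm
    have hm_pos : (0 : ℝ) < m := by exact_mod_cast (mem_Icc.1 hm).1
    rw [Nat.cast_mul, Nat.cast_two, log_mul two_ne_zero hm_pos.ne']
    field_simp
  have h_split : ∑ n ∈ Icc 1 N, log n / n + ∑ n ∈ Ioc N (2 * N), log n / n =
      ∑ n ∈ Icc 1 (2 * N), log n / n := by
    rw [← zero_add 1, Icc_add_one_left_eq_Ioc, Icc_add_one_left_eq_Ioc]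
    exact sum_Ioc_consecutive _ (Nat.zero_le N) (by omega)
  simp_rw [mul_div_assoc]
  rw [sum_Icc_neg_one_pow_mul_eq, mul_sum, sum_congr rfl h_double, sum_add_distrib, ← mul_sum,
    harmonic_eq_sum_Icc, ← h_split]
  push_cast
  ring

open Filter Finset in
theorem alternating_log_sum :
    Tendsto (fun N : ℕ => ∑ n ∈ Finset.Icc 1 N, (-1 : ℝ) ^ (n + 1) * Real.log n / n)
      atTop
      (nhds (1 / 2 * Real.log 2 ^ 2 - Real.eulerMascheroniConstant * Real.log 2)) := by
  have h_even : Tendsto (fun N : ℕ ↦ ∑ n ∈ Icc 1 (2 * N), (-1 : ℝ) ^ (n + 1) * log n / n) atTop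
      (𝓝 (1 / 2 * log 2 ^ 2 - eulerMascheroniConstant * log 2)) := by
    convert tendsto_sum_Ioc_log_div_self_sub.sub (tendsto_harmonic_sub_log.const_mul (log 2))
      using 1
    · ext N
      rw [sum_Icc_neg_one_pow_mul_log_div_self]
      ring
    · ring_nf
  refine Tendsto.of_comp_two_mul_of_comp_two_mul_add_one h_even ?_
  have h_odd_index : Tendsto (fun N : ℕ ↦ 2 * N + 1) atTop atTop :=
    tendsto_atTop_atTop.2 fun b ↦ ⟨b, fun N hN ↦ by omega⟩
  have h_last := tendsto_log_div_self_natCast.comp h_odd_index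
  convert h_even.add h_last using 1
  · ext N
    have h_even_exp : Even (2 * N + 1 + 1) := ⟨N + 1, by ring⟩
    simp [sum_Icc_succ_top, h_even_exp.neg_one_pow]
  · rw [add_zero]
end

section
/- The derivative of the Riemann zeta function at 0 equals -(1/2) log(2π). -/
theorem zeta_deriv_zero :
    deriv riemannZeta 0 = -(1 / 2) * Real.log (2 * Real.pi) := by
  rw [deriv_riemannZeta_zero, Complex.ofReal_log (by positivity)]
  push_cast
  ring
end
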